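/- arXiv:math/0112006 — 3 statements merged into one kernel-verified Lean document; each statement's English description precedes it below -/
import Mathlib

section
/- Let G be a group (with the discrete topology) acting continuously and properly discontinuously on a locally compact Hausdorff space X, and acting continuously on a topological space E. Let G act diagonally on X × E, and let p : (X × E)/G → X/G be the continuous map induced by the projection X × E → X. Then for every x ∈ X, the fiber p⁻¹([x]), with the subspace topology from (X × E)/G, is homeomorphic to the orbit space E/G_x, where the stabilizer G_x acts on E by restriction of the G-action. -/
/-!
The fiber over `[x]` consists of the classes `[(x, e)]`, and `[(x, a)] = [(x, b)]` exactly when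
`a` and `b` differ by an element of `Gₓ`; so `e ↦ [(x, e)]` induces a continuous bijection
`E/Gₓ → p⁻¹[x]`. It is open because proper discontinuity yields a neighbourhood `U` of `x` whose
translates `g • U` meet `U` only for `g ∈ Gₓ`: the image of an open `O ⊆ E/Gₓ` is then the trace
on the fiber of the open set `[U × q⁻¹ O]`, where `q : E → E/Gₓ`.
-/

open Pointwise

universe u

namespace MulAction

variable (G : Type*) {X E : Type*} [Group G] [MulAction G X] [MulAction G E]

def quotientFst : Quotient (orbitRel G (X × E)) → Quotient (orbitRel G X) :=
  Quotient.map Prod.fst fun _ _ ⟨g, hg⟩ => ⟨g, congrArg Prod.fst hg⟩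

variable {G}

theorem mk_prod_eq_mk_prod_iff (x : X) (a b : E) :
    Quotient.mk (orbitRel G (X × E)) (x, a) = Quotient.mk _ (x, b) ↔
      Quotient.mk (orbitRel (stabilizer G x) E) a = Quotient.mk _ b := by
  simp only [Quotient.eq, orbitRel_apply, mem_orbit_iff, Prod.smul_mk, Prod.mk.injEq,
    Subtype.exists, mem_stabilizer_iff]
  exact ⟨fun ⟨g, hgx, hg⟩ => ⟨g, hgx, hg⟩, fun ⟨g, hgx, hg⟩ => ⟨g, hgx, hg⟩⟩

theorem exists_mk_prod_eq_of_quotientFst_eq {x : X} {q : Quotient (orbitRel G (X × E))}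
    (hq : quotientFst G q = Quotient.mk _ x) : ∃ e : E, Quotient.mk _ (x, e) = q := by
  induction q using Quotient.ind with | _ z =>
  obtain ⟨g, hg⟩ := Quotient.exact hq
  exact ⟨g⁻¹ • z.2, Quotient.sound ⟨g⁻¹, Prod.ext (by simp [← show g • x = z.1 from hg]) rfl⟩⟩

noncomputable def stabilizerQuotientEquivFiber (x : X) :
    Quotient (orbitRel (stabilizer G x) E) ≃
      quotientFst G (E := E) ⁻¹' {Quotient.mk (orbitRel G X) x} :=
  .ofBijective
    (Quotient.lift (fun e => ⟨Quotient.mk _ (x, e), rfl⟩) fun a b hab =>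
      Subtype.ext <| (mk_prod_eq_mk_prod_iff x a b).2 (Quotient.sound hab))
    ⟨by
      rintro ⟨a⟩ ⟨b⟩ hab
      exact (mk_prod_eq_mk_prod_iff x a b).1 (congrArg Subtype.val hab),
    by
      rintro ⟨q, hq⟩
      obtain ⟨e, rfl⟩ := exists_mk_prod_eq_of_quotientFst_eq hq
      exact ⟨Quotient.mk _ e, rfl⟩⟩

variable [TopologicalSpace X] [TopologicalSpace E]

theorem continuous_stabilizerQuotientEquivFiber (x : X) :
    Continuous (stabilizerQuotientEquivFiber (G := G) (E := E) x) :=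
  continuous_quot_lift _ <| (continuous_quot_mk.comp (.prodMk_right x)).subtype_mk _

theorem isOpenMap_stabilizerQuotientEquivFiber [ContinuousConstSMul G X]
    [ContinuousConstSMul G E] [T2Space X] [LocallyCompactSpace X]
    [ProperlyDiscontinuousSMul G X] (x : X) :
    IsOpenMap (stabilizerQuotientEquivFiber (G := G) (E := E) x) := by
  obtain ⟨U, hU, hUx⟩ := ProperlyDiscontinuousSMul.exists_nhds_image_smul_eq_self G x
  obtain ⟨W, hWU, hW, hxW⟩ := mem_nhds_iff.1 hU
  intro O hO
  set V : Set E := Quotient.mk _ ⁻¹' O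
  suffices h : stabilizerQuotientEquivFiber x '' O =
      Subtype.val ⁻¹' (Quotient.mk (orbitRel G (X × E)) '' W ×ˢ V) from
    h ▸ (isOpenMap_quotient_mk'_mul _ (hW.prod (hO.preimage continuous_quot_mk))).preimage
      continuous_subtype_val
  ext ⟨q, hq⟩
  constructor
  · rintro ⟨⟨e⟩, he, hq'⟩
    exact ⟨(x, e), ⟨hxW, he⟩, congrArg Subtype.val hq'⟩
  · rintro ⟨⟨y, e⟩, ⟨hy, he⟩, rfl⟩
    obtain ⟨g, rfl⟩ := Quotient.exact hq
    have hgx : g • x = x := hUx g ⟨g • x, ⟨x, hWU hxW, rfl⟩, hWU hy⟩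
    refine ⟨Quotient.mk _ e, he, Subtype.ext ?_⟩
    exact congrArg (fun y => Quotient.mk (orbitRel G (X × E)) (y, e)) hgx.symm

noncomputable def stabilizerQuotientHomeomorphFiber [ContinuousConstSMul G X]
    [ContinuousConstSMul G E] [T2Space X] [LocallyCompactSpace X]
    [ProperlyDiscontinuousSMul G X] (x : X) :
    Quotient (orbitRel (stabilizer G x) E) ≃ₜ
      quotientFst G (E := E) ⁻¹' {Quotient.mk (orbitRel G X) x} :=
  (stabilizerQuotientEquivFiber x).toHomeomorphOfContinuousOpen
    (continuous_stabilizerQuotientEquivFiber x) (isOpenMap_stabilizerQuotientEquivFiber x)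

end MulAction

theorem fiber_of_borel_projection_homeomorphic_orbit_space_general
    {G : Type u} [Group G] {X E : Type u} [TopologicalSpace X] [TopologicalSpace E]
    [MulAction G X] [MulAction G E]
    -- the (discrete) group `G` acts continuously on `X` and `E`
    (hX : ∀ g : G, Continuous fun a : X => g • a)
    (hE : ∀ g : G, Continuous fun e : E => g • e)
    -- `X` is locally compact Hausdorff
    [LocallyCompactSpace X] [T2Space X]
    -- the action of `G` on `X` is properly discontinuous
    (hpd : ∀ K L : Set X, IsCompact K → IsCompact L →
      {g : G | (g • K) ∩ L ≠ ∅}.Finite)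
    -- `p : (X × E)/G → X/G` is induced by the projection `X × E → X`
    (p : Quotient (MulAction.orbitRel G (X × E)) → Quotient (MulAction.orbitRel G X))
    (hp' : ∀ z : X × E, p (Quotient.mk _ z) = Quotient.mk _ z.1)
    (x : X) :
    Nonempty ((p ⁻¹' {Quotient.mk _ x} : Set (Quotient (MulAction.orbitRel G (X × E))))
      ≃ₜ Quotient (MulAction.orbitRel (MulAction.stabilizer G x) E)) := by
  have : ContinuousConstSMul G X := ⟨hX⟩
  have : ContinuousConstSMul G E := ⟨hE⟩
  have : ProperlyDiscontinuousSMul G X := properlyDiscontinuousSMul_iff.2 fun hK hL =>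
    by simpa only [Set.nonempty_iff_ne_empty] using hpd _ _ hK hL
  obtain rfl : p = MulAction.quotientFst G := funext <| Quotient.ind hp'
  exact ⟨(MulAction.stabilizerQuotientHomeomorphFiber x).symm⟩

theorem fiber_of_borel_projection_homeomorphic_orbit_space
    {G : Type u} [Group G] {X E : Type u} [TopologicalSpace X] [TopologicalSpace E]
    [MulAction G X] [MulAction G E]
    -- the (discrete) group `G` acts continuously on `X` and `E`
    (hX : ∀ g : G, Continuous fun a : X => g • a)
    (hE : ∀ g : G, Continuous fun e : E => g • e)
    -- `X` is locally compact Hausdorff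
    [LocallyCompactSpace X] [T2Space X]
    -- the action of `G` on `X` is properly discontinuous
    (hpd : ∀ K L : Set X, IsCompact K → IsCompact L →
      {g : G | (g • K) ∩ L ≠ ∅}.Finite)
    -- `p : (X × E)/G → X/G` is induced by the projection `X × E → X`
    (p : Quotient (MulAction.orbitRel G (X × E)) → Quotient (MulAction.orbitRel G X))
    (hp : Continuous p)
    (hp' : ∀ z : X × E, p (Quotient.mk _ z) = Quotient.mk _ z.1)
    (x : X) :
    Nonempty ((p ⁻¹' {Quotient.mk _ x} : Set (Quotient (MulAction.orbitRel G (X × E))))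
      ≃ₜ Quotient (MulAction.orbitRel (MulAction.stabilizer G x) E)) :=
  fiber_of_borel_projection_homeomorphic_orbit_space_general hX hE hpd p hp' x
end

section
/- Let G be a group (with the discrete topology) acting continuously on topological spaces X and E, let x ∈ X, and let Ū ⊆ X be an open set containing x such that g•Ū = Ū for every g in the stabilizer G_x, and (g•Ū) ∩ Ū = ∅ for every g ∉ G_x. Equip Ū × E with the diagonal G_x-action and (G•Ū) × E with the diagonal G-action (where G•Ū = ⋃_{g∈G} g•Ū). Then the inclusion Ū × E ↪ (G•Ū) × E induces a homeomorphism of orbit spaces (Ū × E)/G_x ≅ ((G•Ū) × E)/G. -/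
/-!
A point `p` of `(⋃ g, g • U) × E` has its first coordinate in some translate `g • U`, and
`g⁻¹ • p ∈ U × E`. Since `g • u ∈ U` with `u ∈ U` forces `g ∈ H`, the class of `g⁻¹ • p` in
`(U × E)/H` does not depend on the choice of `g`; this inverts the map induced by the inclusion.
The inverse is continuous because on the open set `(g • U) × E` it is induced by the single
homeomorphism `g⁻¹`.
-/

open Pointwise Set

universe u

section

variable {G X : Type*} [Group G] [MulAction G X]

variable (G) in
def diagOrbitRel (S : Set X) (E : Type*) [MulAction G E] : S × E → S × E → Prop :=
  fun a b => ∃ g : G, g • (a.1 : X) = b.1 ∧ g • a.2 = b.2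

def subgroupDiagOrbitRel (H : Subgroup G) (S : Set X) (E : Type*) [MulAction G E] :
    S × E → S × E → Prop :=
  fun a b => ∃ g ∈ H, g • (a.1 : X) = b.1 ∧ g • a.2 = b.2

theorem mem_iUnion_smul_of_mem {U : Set X} {u : X} (hu : u ∈ U) : u ∈ ⋃ g : G, g • U :=
  mem_iUnion.mpr ⟨1, by rwa [one_smul]⟩

theorem mem_of_smul_mem_of_smul_inter_eq_empty {H : Subgroup G} {U : Set X}
    (hdisj : ∀ g ∉ H, g • U ∩ U = ∅) {g : G} {u : X} (hu : u ∈ U) (hgu : g • u ∈ U) :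
    g ∈ H := by
  by_contra hg
  have : g • u ∈ g • U ∩ U := ⟨smul_mem_smul_set hu, hgu⟩
  rwa [hdisj g hg] at this

variable {H : Subgroup G} {U : Set X} {E : Type*} [MulAction G E]

variable (H U E) in
def sliceQuotToSaturation :
    Quot (subgroupDiagOrbitRel H U E) → Quot (diagOrbitRel G (⋃ g : G, g • U) E) :=
  Quot.lift (fun a => Quot.mk _ (⟨a.1, mem_iUnion_smul_of_mem a.1.2⟩, a.2))
    fun _ _ ⟨g, _, h₁, h₂⟩ => Quot.sound ⟨g, h₁, h₂⟩

variable (H U) in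
def invSMulClass (g : G) (p : X × E) (hp : p.1 ∈ g • U) : Quot (subgroupDiagOrbitRel H U E) :=
  Quot.mk _ (⟨g⁻¹ • p.1, mem_smul_set_iff_inv_smul_mem.mp hp⟩, g⁻¹ • p.2)

theorem invSMulClass_eq_invSMulClass (hU : ∀ g : G, ∀ u ∈ U, g • u ∈ U → g ∈ H)
    {g g' : G} {p : X × E} (hp : p.1 ∈ g • U) (hp' : p.1 ∈ g' • U) :
    invSMulClass H U g p hp = invSMulClass H U g' p hp' := by
  have hmove : (g'⁻¹ * g) • g⁻¹ • p = g'⁻¹ • p := by rw [mul_smul, smul_inv_smul]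
  have hfst : (g'⁻¹ * g) • g⁻¹ • p.1 = g'⁻¹ • p.1 := congrArg Prod.fst hmove
  refine Quot.sound ⟨g'⁻¹ * g, ?_, hfst, congrArg Prod.snd hmove⟩
  exact hU _ _ (mem_smul_set_iff_inv_smul_mem.mp hp)
    (hfst ▸ mem_smul_set_iff_inv_smul_mem.mp hp')

theorem invSMulClass_of_eq_smul {g k : G} {p q : X × E} (hq_eq : q = k • p) (hp : p.1 ∈ g • U)
    (hq : q.1 ∈ (k * g) • U) : invSMulClass H U (k * g) q hq = invSMulClass H U g p hp := by
  subst hq_eq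
  simp only [invSMulClass, Prod.smul_fst, Prod.smul_snd, mul_inv_rev, mul_smul, inv_smul_smul]

theorem invSMulClass_one {p : X × E} (hp : p.1 ∈ (1 : G) • U) :
    invSMulClass H U 1 p hp = Quot.mk _ (⟨p.1, by rwa [one_smul] at hp⟩, p.2) := by
  simp only [invSMulClass, inv_one, one_smul]

theorem sliceQuotToSaturation_invSMulClass {g : G} (q : ↥(⋃ g : G, g • U) × E)
    (hq : (q.1 : X) ∈ g • U) :
    sliceQuotToSaturation H U E (invSMulClass H U g ((q.1 : X), q.2) hq) = Quot.mk _ q :=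
  Quot.sound ⟨g, smul_inv_smul g _, smul_inv_smul g _⟩

theorem continuous_invSMulClass [TopologicalSpace X] [TopologicalSpace E] [ContinuousConstSMul G X]
    [ContinuousConstSMul G E] (g : G) :
    Continuous fun p : {p : X × E // p.1 ∈ g • U} => invSMulClass H U g p.1 p.2 :=
  continuous_quot_mk.comp <|
    (((continuous_const_smul g⁻¹).comp (continuous_fst.comp continuous_subtype_val)).subtype_mk
      _).prodMk ((continuous_const_smul g⁻¹).comp (continuous_snd.comp continuous_subtype_val))

variable (H U E) in
noncomputable def saturationToSliceQuot (q : ↥(⋃ g : G, g • U) × E) :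
    Quot (subgroupDiagOrbitRel H U E) :=
  invSMulClass H U (mem_iUnion.mp q.1.2).choose ((q.1 : X), q.2) (mem_iUnion.mp q.1.2).choose_spec

theorem saturationToSliceQuot_eq (hU : ∀ g : G, ∀ u ∈ U, g • u ∈ U → g ∈ H)
    {g : G} (q : ↥(⋃ g : G, g • U) × E) (hq : (q.1 : X) ∈ g • U) :
    saturationToSliceQuot H U E q = invSMulClass H U g ((q.1 : X), q.2) hq :=
  invSMulClass_eq_invSMulClass hU _ _

theorem continuous_saturationToSliceQuot [TopologicalSpace X] [TopologicalSpace E]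
    [ContinuousConstSMul G X] [ContinuousConstSMul G E]
    (hU : ∀ g : G, ∀ u ∈ U, g • u ∈ U → g ∈ H) (hUo : IsOpen U) :
    Continuous (saturationToSliceQuot H U E) := by
  refine continuous_iff_continuousAt.mpr fun q => ?_
  obtain ⟨g, hg⟩ := mem_iUnion.mp q.1.2
  let O : Set (↥(⋃ g : G, g • U) × E) := {q | (q.1 : X) ∈ g • U}
  have hO : IsOpen O := (hUo.smul g).preimage (continuous_subtype_val.comp continuous_fst)
  have hcont : ContinuousOn (saturationToSliceQuot H U E) O := by
    rw [continuousOn_iff_continuous_domRestrict]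
    have hrestrict : O.domRestrict (saturationToSliceQuot H U E) =
        fun q : O => invSMulClass H U g (((q : ↥(⋃ g : G, g • U) × E).1 : X), q.1.2) q.2 :=
      funext fun q => saturationToSliceQuot_eq hU q.1 q.2
    rw [hrestrict]
    exact (continuous_invSMulClass g).comp <|
      (((continuous_subtype_val.comp continuous_fst).comp continuous_subtype_val).prodMk
        (continuous_snd.comp continuous_subtype_val)).subtype_mk fun q => q.2
  exact hcont.continuousAt (hO.mem_nhds hg)

variable (E) in
noncomputable def saturationQuotToSlice (hU : ∀ g : G, ∀ u ∈ U, g • u ∈ U → g ∈ H) :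
    Quot (diagOrbitRel G (⋃ g : G, g • U) E) → Quot (subgroupDiagOrbitRel H U E) :=
  Quot.lift (saturationToSliceQuot H U E) fun a b ⟨k, h₁, h₂⟩ => by
    obtain ⟨g, hg⟩ := mem_iUnion.mp a.1.2
    have hb : (b.1 : X) ∈ (k * g) • U := h₁ ▸ mul_smul k g U ▸ smul_mem_smul_set hg
    have hba : ((b.1 : X), b.2) = k • ((a.1 : X), a.2) := Prod.ext h₁.symm h₂.symm
    rw [saturationToSliceQuot_eq hU a hg, saturationToSliceQuot_eq hU b hb]
    exact (invSMulClass_of_eq_smul hba hg hb).symm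

variable (E) in
noncomputable def sliceQuotHomeomorph [TopologicalSpace X] [TopologicalSpace E]
    [ContinuousConstSMul G X] [ContinuousConstSMul G E]
    (hU : ∀ g : G, ∀ u ∈ U, g • u ∈ U → g ∈ H) (hUo : IsOpen U) :
    Quot (subgroupDiagOrbitRel H U E) ≃ₜ Quot (diagOrbitRel G (⋃ g : G, g • U) E) where
  toFun := sliceQuotToSaturation H U E
  invFun := saturationQuotToSlice E hU
  left_inv := Quot.ind fun a => by
    change saturationToSliceQuot H U E _ = _
    rw [saturationToSliceQuot_eq hU _ (by rw [one_smul]; exact a.1.2), invSMulClass_one]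
  right_inv := Quot.ind fun q => by
    obtain ⟨g, hg⟩ := mem_iUnion.mp q.1.2
    change sliceQuotToSaturation H U E (saturationToSliceQuot H U E q) = _
    rw [saturationToSliceQuot_eq hU q hg, sliceQuotToSaturation_invSMulClass]
  continuous_toFun := continuous_quot_lift _ <| continuous_quot_mk.comp <|
    ((continuous_subtype_val.comp continuous_fst).subtype_mk _).prodMk continuous_snd
  continuous_invFun := continuous_quot_lift _ (continuous_saturationToSliceQuot hU hUo)

end

theorem orbit_space_of_slice_homeomorphic
    {G : Type u} [Group G] {X E : Type u} [TopologicalSpace X] [TopologicalSpace E]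
    [MulAction G X] [MulAction G E]
    -- the group `G` acts by homeomorphisms on `X` and `E`
    (hX : ∀ g : G, Continuous fun a : X => g • a)
    (hE : ∀ g : G, Continuous fun e : E => g • e)
    (x : X) (U : Set X) (hUopen : IsOpen U)
    -- `Ū` is disjoint from its translates by elements outside the stabilizer
    (hdisj : ∀ g ∉ MulAction.stabilizer G x, (g • U) ∩ U = ∅) :
    -- the orbit space `(Ū × E)/Gₓ` is homeomorphic to `((G•Ū) × E)/G`,
    -- via the map induced by the inclusion `Ū × E ↪ (G•Ū) × E`
    ∃ φ : Quot (fun a b : ↥U × E => ∃ g ∈ MulAction.stabilizer G x,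
          g • (a.1 : X) = (b.1 : X) ∧ g • a.2 = b.2) ≃ₜ
        Quot (fun a b : ↥(⋃ g : G, g • U) × E => ∃ g : G,
          g • (a.1 : X) = (b.1 : X) ∧ g • a.2 = b.2),
      ∀ a : ↥U × E,
        φ (Quot.mk _ a) =
          Quot.mk _ (⟨(a.1 : X), Set.mem_iUnion.mpr ⟨1, by rw [one_smul]; exact a.1.2⟩⟩,
            a.2) := by
  have : ContinuousConstSMul G X := ⟨hX⟩
  have : ContinuousConstSMul G E := ⟨hE⟩
  exact ⟨sliceQuotHomeomorph E
    (fun _ _ hu hgu => mem_of_smul_mem_of_smul_inter_eq_empty hdisj hu hgu) hUopen,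
    fun _ => rfl⟩
end

section
/- Let G be a group (with the discrete topology) acting continuously and properly discontinuously on a locally compact Hausdorff space X, and acting freely and continuously on a contractible, path-connected, locally path-connected space E such that every point of E has an open neighborhood V with (g•V) ∩ V = ∅ for all g ≠ 1. Let p : (X × E)/G → X/G be the map induced by the projection X × E → X (diagonal G-action on X × E). Then for every x ∈ X, the fiber p⁻¹([x]) is a K(G_x,1): its fundamental group (at any basepoint) is isomorphic to the stabilizer G_x, and its homotopy groups πₙ vanish for all n ≥ 2. -/
open Pointwise Set Function Topology unitInterval
open scoped Topology.Homotopy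

universe u

/-!
Let `Gₓ` be the stabilizer of `x`. The map `E → p⁻¹[x]`, `e ↦ [x, e]`, identifies the fiber with
`E / Gₓ`. Proper discontinuity yields a neighbourhood of `x` meeting the orbit `G • x` only in `x`,
which makes this map open; the wandering neighbourhoods in `E` then make it a covering map with deck
group `Gₓ`, and since `E` is simply connected, covering theory gives `π₁ ≅ Gₓ`. For `n ≥ 2` the
boundary of the cube `Iⁿ` is connected, so a generalized loop in the fiber lifts to a generalized
loop in `E`, which is null-homotopic relative to the boundary because `E` is contractible.
-/

namespace Cube

variable {N : Type*}

theorem isPreconnected_face (i : N) (c : I) : IsPreconnected {u : I^N | u i = c} := by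
  classical
  convert isPreconnected_range (continuous_id.update i continuous_const :
    Continuous fun u : I^N => update u i c)
  ext u
  refine ⟨fun (hu : u i = c) => ⟨u, by subst hu; exact update_eq_self i u⟩, ?_⟩
  rintro ⟨v, rfl⟩
  simp

theorem isPreconnected_boundary [Nontrivial N] : IsPreconnected (boundary N) := by
  classical
  obtain ⟨i, j, hij⟩ := exists_pair_ne N
  have faces (c : I) : IsPreconnected (⋃ k, {u : I^N | u k = c}) :=
    isPreconnected_iUnion ⟨fun _ => c, mem_iInter.2 fun _ => rfl⟩ fun k => isPreconnected_face k c
  have hbd : boundary N = (⋃ k, {u : I^N | u k = 0}) ∪ ⋃ k, {u : I^N | u k = 1} := by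
    ext u
    simp [boundary, exists_or]
  rw [hbd]
  exact (faces 0).union (update (fun _ => 0) j 1) (mem_iUnion.2 ⟨i, by simp [hij]⟩)
    (mem_iUnion.2 ⟨j, by simp⟩) (faces 1)

noncomputable def dilate (s : I) (u : I^N) : I^N :=
  fun i => projIcc 0 1 zero_le_one (1 / 2 + (1 + s) * (u i - 1 / 2))

@[fun_prop]
theorem continuous_dilate : Continuous fun q : I × I^N => dilate q.1 q.2 := by
  unfold dilate
  fun_prop

@[simp]
theorem dilate_zero (u : I^N) : dilate 0 u = u := by
  funext i
  simp [dilate]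

theorem dilate_mem_boundary (s : I) {u : I^N} (hu : u ∈ boundary N) : dilate s u ∈ boundary N := by
  obtain ⟨i, hi | hi⟩ := hu
  · refine ⟨i, .inl (Subtype.ext ?_)⟩
    simp only [dilate, hi, Icc.coe_zero]
    rw [projIcc_of_le_left _ (by nlinarith [s.2.1])]
  · refine ⟨i, .inr (Subtype.ext ?_)⟩
    simp only [dilate, hi, Icc.coe_one]
    rw [projIcc_of_right_le _ (by nlinarith [s.2.1])]

variable [Fintype N]

noncomputable def plateau (u : I^N) : I :=
  ∏ i, projIcc 0 1 zero_le_one (4 * min (u i : ℝ) (1 - u i))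

@[fun_prop]
theorem continuous_plateau : Continuous (plateau (N := N)) := by
  unfold plateau
  fun_prop

theorem plateau_eq_zero_of_mem_boundary {u : I^N} (hu : u ∈ boundary N) : plateau u = 0 := by
  obtain ⟨i, hi⟩ := hu
  refine Finset.prod_eq_zero (Finset.mem_univ i) (Subtype.ext ?_)
  rcases hi with hi | hi <;> simp [hi]

theorem plateau_eq_one_or_dilate_one_mem_boundary (u : I^N) :
    plateau u = 1 ∨ dilate 1 u ∈ boundary N := by
  by_cases h : ∃ i, (u i : ℝ) ≤ 1 / 4 ∨ 3 / 4 ≤ (u i : ℝ)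
  · obtain ⟨i, hi | hi⟩ := h
    · refine .inr ⟨i, .inl (Subtype.ext ?_)⟩
      simp only [dilate, Icc.coe_one]
      rw [projIcc_of_le_left _ (by linarith)]
      rfl
    · refine .inr ⟨i, .inr (Subtype.ext ?_)⟩
      simp only [dilate, Icc.coe_one]
      rw [projIcc_of_right_le _ (by linarith)]
  · push Not at h
    refine .inl (Finset.prod_eq_one fun i _ => Subtype.ext ?_)
    have := le_min (h i).1.le (by linarith [(h i).2] : (1 : ℝ) / 4 ≤ 1 - u i)
    rw [projIcc_of_right_le _ (by linarith)]
    rfl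

end Cube

namespace GenLoop

open ContinuousMap Cube

variable {N X : Type*} [Fintype N] [TopologicalSpace X] {x : X}

theorem homotopic_const [ContractibleSpace X] (f : Ω^ N X x) : Homotopic f const := by
  obtain ⟨c, ⟨K⟩⟩ := id_nullhomotopic X
  let bump : C(I^N, X) := ⟨fun u => K (plateau u, x), by fun_prop⟩
  -- `push` runs the contraction for time `s * plateau u` while dilating the cube by `1 + s`: at
  -- `s = 1` each point has either finished contracting or been pushed onto the boundary.
  have push : (f : C(I^N, X)).HomotopicRel bump (Cube.boundary N) := ⟨
    { toFun := fun q => K (q.1 * plateau q.2, f (dilate q.1 q.2))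
      continuous_toFun := by fun_prop
      map_zero_left u := by simp
      map_one_left u := by
        rcases plateau_eq_one_or_dilate_one_mem_boundary u with h | h
        · simp [bump, h]
        · simp [bump, boundary f _ h]
      prop' t u hu := by
        simp [plateau_eq_zero_of_mem_boundary hu, boundary f _ hu,
          boundary f _ (dilate_mem_boundary t hu)] }⟩
  have shrink : bump.HomotopicRel (const : Ω^ N X x) (Cube.boundary N) := ⟨
    { toFun := fun q => K (σ q.1 * plateau q.2, x)
      continuous_toFun := by fun_prop
      map_zero_left u := by simp [bump]
      map_one_left u := by simp
      prop' t u hu := by simp [bump, plateau_eq_zero_of_mem_boundary hu] }⟩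
  exact push.trans shrink

end GenLoop

namespace IsCoveringMap

variable {E X N : Type*} [TopologicalSpace E] [TopologicalSpace X] {p : E → X}
  (cov : IsCoveringMap p)
include cov

theorem exists_genLoop_lift [Nontrivial N] {e : E} (f : Ω^ N X (p e)) :
    ∃ g : Ω^ N E e, (⟨p, cov.continuous⟩ : C(E, X)).comp g = (f : C(I^N, X)) := by
  classical
  obtain ⟨i⟩ : Nonempty N := inferInstance
  let H : C(I × I^{j // j ≠ i}, X) := (f : C(I^N, X)).comp (Cube.insertAt i)
  have H_0 (a : I^{j // j ≠ i}) : H (0, a) = p (ContinuousMap.const _ e a) :=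
    GenLoop.boundary f _ (Cube.insertAt_boundary i (.inl (.inl rfl)))
  let g : C(I^N, E) := (cov.liftHomotopy H _ H_0).comp (Cube.splitAt i)
  have g_lifts (u : I^N) : p (g u) = f u :=
    (congr_fun (cov.liftHomotopy_lifts H _ H_0) (Cube.splitAt i u)).trans
      (congr_arg f ((Cube.splitAt i).symm_apply_apply u))
  have g_corner : g (Cube.insertAt i (0, fun _ => 0)) = e :=
    (congr_arg _ ((Cube.splitAt i).apply_symm_apply _)).trans (cov.liftHomotopy_zero H _ H_0 _)
  have hg : EqOn g (fun _ => e) (Cube.boundary N) :=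
    cov.eqOn_of_comp_eqOn Cube.isPreconnected_boundary g.continuous.continuousOn
      continuousOn_const (fun u hu => by simp [g_lifts, GenLoop.boundary f u hu])
      (Cube.insertAt_boundary i (.inl (.inl rfl))) g_corner
  exact ⟨⟨g, fun u hu => hg hu⟩, ContinuousMap.ext g_lifts⟩

theorem subsingleton_homotopyGroup [ContractibleSpace E] [Fintype N] [Nontrivial N] (e : E) :
    Subsingleton (HomotopyGroup N X (p e)) := by
  have null (f : Ω^ N X (p e)) : GenLoop.Homotopic f GenLoop.const := by
    obtain ⟨g, hg⟩ := cov.exists_genLoop_lift f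
    have := (GenLoop.homotopic_const g).comp_continuousMap ⟨p, cov.continuous⟩
    rwa [hg] at this
  exact ⟨Quotient.ind₂ fun f f' => Quotient.sound ((null f).trans (null f').symm)⟩

end IsCoveringMap

section BorelFiber

open MulAction

variable {G X E : Type*} [Group G] [MulAction G X] [MulAction G E]
  {p : Quotient (orbitRel G (X × E)) → Quotient (orbitRel G X)}
  (hp : ∀ z : X × E, p (Quotient.mk _ z) = Quotient.mk _ z.1) (x : X)

def borelFiberMap (e : E) : p ⁻¹' {Quotient.mk _ x} :=
  ⟨Quotient.mk _ (x, e), by simp [hp]⟩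

theorem borelFiberMap_surjective : Surjective (borelFiberMap hp x) := by
  rintro ⟨q, hq⟩
  induction q using Quotient.inductionOn with | h z =>
  obtain ⟨g, hg⟩ : z.1 ∈ orbit G x := Quotient.eq''.1 (by simpa [hp] using hq)
  exact ⟨g⁻¹ • z.2, Subtype.ext (Quotient.eq''.2 ⟨g⁻¹, Prod.ext (inv_smul_eq_iff.2 hg.symm) rfl⟩)⟩

theorem borelFiberMap_eq_iff {e₁ e₂ : E} :
    borelFiberMap hp x e₁ = borelFiberMap hp x e₂ ↔ e₁ ∈ orbit (stabilizer G x) e₂ := by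
  rw [Subtype.ext_iff]
  refine Quotient.eq''.trans ⟨?_, ?_⟩
  · rintro ⟨g, hg⟩
    exact ⟨⟨g, congr_arg Prod.fst hg⟩, congr_arg Prod.snd hg⟩
  · rintro ⟨⟨g, hgx⟩, hg⟩
    exact ⟨g, Prod.ext hgx hg⟩

variable [TopologicalSpace X] [TopologicalSpace E]

theorem continuous_borelFiberMap : Continuous (borelFiberMap hp x) :=
  (continuous_quot_mk.comp (Continuous.prodMk_right x)).subtype_mk _

variable [ContinuousConstSMul G X] [ContinuousConstSMul G E]

theorem isOpenMap_borelFiberMap [ProperlyDiscontinuousSMul G X] [LocallyCompactSpace X]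
    [T2Space X] : IsOpenMap (borelFiberMap hp x) := by
  obtain ⟨A, hA, hAx⟩ := ProperlyDiscontinuousSMul.exists_nhds_image_smul_eq_self G x
  intro U hU
  suffices borelFiberMap hp x '' U =
      Subtype.val ⁻¹' (Quotient.mk _ '' (interior A ×ˢ U)) by
    rw [this]
    exact (MulAction.isOpenQuotientMap_quotientMk.isOpenMap _
      (isOpen_interior.prod hU)).preimage continuous_subtype_val
  ext ⟨q, hq⟩
  constructor
  · rintro ⟨e, he, he'⟩
    exact ⟨(x, e), ⟨mem_interior_iff_mem_nhds.2 hA, he⟩, congr_arg Subtype.val he'⟩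
  · rintro ⟨⟨a, e⟩, ⟨ha, he⟩, rfl⟩
    obtain ⟨g, rfl⟩ : a ∈ orbit G x := Quotient.eq''.1 (by simpa [hp] using hq)
    have hgx : g • x = x := hAx g ⟨g • x, ⟨x, mem_of_mem_nhds hA, rfl⟩, interior_subset ha⟩
    exact ⟨e, he, Subtype.ext (by simp [borelFiberMap, hgx])⟩

theorem isQuotientCoveringMap_borelFiberMap [ProperlyDiscontinuousSMul G X]
    [LocallyCompactSpace X] [T2Space X]
    (hdisj : ∀ e : E, ∃ U ∈ 𝓝 e, ∀ g : G, ((g • ·) '' U ∩ U).Nonempty → g = 1) :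
    IsQuotientCoveringMap (borelFiberMap hp x) (stabilizer G x) where
  toIsQuotientMap := (isOpenMap_borelFiberMap hp x).isQuotientMap
    (continuous_borelFiberMap hp x) (borelFiberMap_surjective hp x)
  continuous_const_smul g := continuous_const_smul (g : G)
  apply_eq_iff_mem_orbit := borelFiberMap_eq_iff hp x
  disjoint e := by
    obtain ⟨U, hU, hUg⟩ := hdisj e
    exact ⟨U, hU, fun g hg => Subtype.ext (hUg g hg)⟩

end BorelFiber

theorem fiber_of_borel_projection_is_KG1_general
    {G : Type u} [Group G] {X E : Type u} [TopologicalSpace X] [TopologicalSpace E]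
    [MulAction G X] [MulAction G E]
    -- the (discrete) group `G` acts continuously on `X` and `E`
    (hX : ∀ g : G, Continuous fun a : X => g • a)
    (hE : ∀ g : G, Continuous fun e : E => g • e)
    -- `X` is locally compact Hausdorff
    [LocallyCompactSpace X] [T2Space X]
    -- the action of `G` on `X` is properly discontinuous
    (hpd : ∀ K L : Set X, IsCompact K → IsCompact L →
      {g : G | (g • K) ∩ L ≠ ∅}.Finite)
    -- `E` is contractible, path-connected and locally path-connected
    [ContractibleSpace E]
    -- every point of `E` has a neighborhood disjoint from its translates
    (hwander : ∀ e : E, ∃ V : Set E, IsOpen V ∧ e ∈ V ∧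
      ∀ g : G, g ≠ 1 → (g • V) ∩ V = ∅)
    -- `p : (X × E)/G → X/G` is induced by the projection `X × E → X`
    (p : Quotient (MulAction.orbitRel G (X × E)) → Quotient (MulAction.orbitRel G X))
    (hp' : ∀ z : X × E, p (Quotient.mk _ z) = Quotient.mk _ z.1)
    (x : X) :
    ∀ y : (p ⁻¹' {Quotient.mk _ x} : Set (Quotient (MulAction.orbitRel G (X × E)))),
      Nonempty (FundamentalGroup
          (p ⁻¹' {Quotient.mk _ x} : Set (Quotient (MulAction.orbitRel G (X × E)))) y
        ≃* MulAction.stabilizer G x) ∧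
      ∀ n : ℕ, 2 ≤ n →
        Subsingleton (HomotopyGroup (Fin n)
          (p ⁻¹' {Quotient.mk _ x} : Set (Quotient (MulAction.orbitRel G (X × E)))) y) := by
  have : ContinuousConstSMul G X := ⟨hX⟩
  have : ContinuousConstSMul G E := ⟨hE⟩
  have : ProperlyDiscontinuousSMul G X := ⟨fun hK hL => by
    simpa only [image_smul, nonempty_iff_ne_empty] using hpd _ _ hK hL⟩
  have hdisj (e : E) : ∃ U ∈ 𝓝 e, ∀ g : G, ((g • ·) '' U ∩ U).Nonempty → g = 1 := by
    obtain ⟨V, hV, heV, hVg⟩ := hwander e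
    exact ⟨V, hV.mem_nhds heV, fun g hg => by_contra fun h => hg.ne_empty (hVg g h)⟩
  have cov := isQuotientCoveringMap_borelFiberMap hp' x hdisj
  intro y
  obtain ⟨e, rfl⟩ := borelFiberMap_surjective hp' x y
  refine ⟨⟨(cov.fundamentalGroupEquiv ⟨e, rfl⟩).trans (MulEquiv.inv' _).symm⟩, fun n hn => ?_⟩
  have := Fin.nontrivial_iff_two_le.mpr hn
  exact cov.isCoveringMap.subsingleton_homotopyGroup e

theorem fiber_of_borel_projection_is_KG1
    {G : Type u} [Group G] {X E : Type u} [TopologicalSpace X] [TopologicalSpace E]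
    [MulAction G X] [MulAction G E]
    -- the (discrete) group `G` acts continuously on `X` and `E`
    (hX : ∀ g : G, Continuous fun a : X => g • a)
    (hE : ∀ g : G, Continuous fun e : E => g • e)
    -- `X` is locally compact Hausdorff
    [LocallyCompactSpace X] [T2Space X]
    -- the action of `G` on `X` is properly discontinuous
    (hpd : ∀ K L : Set X, IsCompact K → IsCompact L →
      {g : G | (g • K) ∩ L ≠ ∅}.Finite)
    -- the action of `G` on `E` is free
    (hfree : ∀ (g : G) (e : E), g • e = e → g = 1)
    -- `E` is contractible, path-connected and locally path-connected
    [ContractibleSpace E] [PathConnectedSpace E] [LocallyPathConnectedSpace E]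
    -- every point of `E` has a neighborhood disjoint from its translates
    (hwander : ∀ e : E, ∃ V : Set E, IsOpen V ∧ e ∈ V ∧
      ∀ g : G, g ≠ 1 → (g • V) ∩ V = ∅)
    -- `p : (X × E)/G → X/G` is induced by the projection `X × E → X`
    (p : Quotient (MulAction.orbitRel G (X × E)) → Quotient (MulAction.orbitRel G X))
    (hp : Continuous p)
    (hp' : ∀ z : X × E, p (Quotient.mk _ z) = Quotient.mk _ z.1)
    (x : X) :
    ∀ y : (p ⁻¹' {Quotient.mk _ x} : Set (Quotient (MulAction.orbitRel G (X × E)))),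
      Nonempty (FundamentalGroup
          (p ⁻¹' {Quotient.mk _ x} : Set (Quotient (MulAction.orbitRel G (X × E)))) y
        ≃* MulAction.stabilizer G x) ∧
      ∀ n : ℕ, 2 ≤ n →
        Subsingleton (HomotopyGroup (Fin n)
          (p ⁻¹' {Quotient.mk _ x} : Set (Quotient (MulAction.orbitRel G (X × E)))) y) :=
  fiber_of_borel_projection_is_KG1_general hX hE hpd hwander p hp' x
end
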